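/- If g : ℝ → ℂ is an odd Schwartz function, then for every λ > 0 the iterated integral (2/π) ∫₁^∞ sin(λ(s−1)) · ( ∫₀^∞ sin(μ(s−1)) g(μ) dμ ) ds equals g(λ); here the inner integral, as a function of s, decays rapidly, so the outer integral converges absolutely. Equivalently, 𝓕_D ∘ 𝓕_D⁻¹ acts as the identity on odd Schwartz functions restricted to (0,∞). -/

import Mathlib

/-!
After the translation `t = s - 1` the iterated integral is the sine transform
`S h(t) = ∫₀^∞ sin(x t) h(x) dx` applied twice to `g`. For odd integrable `h` the Fourier
integrals fold onto `(0, ∞)`: `𝓕 h w = -2i · S h(2πw)` and `𝓕⁻ h w = 2i · S h(2πw)`. Hence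
`𝓕 g` is again odd, and after rescaling `x = 2πy`,
`S (S g) λ = πi · S (𝓕 g)(2πλ) = (π/2) · 𝓕⁻ (𝓕 g) λ = (π/2) · g λ` by Fourier inversion.
-/

open MeasureTheory Set Real FourierTransform

theorem integral_Ioi_comp_sub_right {E : Type*} [NormedAddCommGroup E] [NormedSpace ℝ E]
    (f : ℝ → E) (a d : ℝ) :
    ∫ x in Ioi a, f (x - d) = ∫ x in Ioi (a - d), f x := by
  have := (measurePreserving_sub_right volume d).setIntegral_preimage_emb
    (measurableEmbedding_subRight d) f (Ioi (a - d))
  rwa [preimage_sub_const_Ioi, sub_add_cancel] at this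

theorem Complex.exp_neg_mul_I_sub_exp_mul_I (θ : ℂ) :
    Complex.exp (-θ * Complex.I) - Complex.exp (θ * Complex.I) =
      -2 * Complex.I * Complex.sin θ := by
  rw [Complex.sin]
  ring_nf
  rw [Complex.I_sq]
  ring

section SineTransform

variable {E : Type*} [NormedAddCommGroup E] [NormedSpace ℂ E]

noncomputable def sineTransform (f : ℝ → E) (t : ℝ) : E :=
  ∫ x in Ioi 0, (Real.sin (x * t) : ℂ) • f x

theorem sineTransform_neg (f : ℝ → E) (t : ℝ) :
    sineTransform f (-t) = -sineTransform f t := by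
  simp only [sineTransform, mul_neg, Real.sin_neg, Complex.ofReal_neg, neg_smul, integral_neg]

theorem Real.fourier_eq_sineTransform_of_odd {f : ℝ → E} (hf : Integrable f)
    (hodd : ∀ x, f (-x) = -f x) (w : ℝ) :
    𝓕 f w = (-2 * Complex.I) • sineTransform f (2 * π * w) := by
  set φ : ℝ → E := fun v ↦ Complex.exp (↑(-2 * π * v * w) * Complex.I) • f v
  have hφ : Integrable φ :=
    hf.bdd_smul 1 (by fun_prop) (.of_forall fun v ↦ by simp [Complex.norm_exp])
  rw [fourier_real_eq_integral_exp_smul, ← intervalIntegral.integral_Iic_add_Ioi (b := 0)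
    hφ.integrableOn hφ.integrableOn, ← neg_zero, ← integral_comp_neg_Ioi, neg_zero,
    ← integral_add hφ.comp_neg.integrableOn hφ.integrableOn, sineTransform, ← integral_smul]
  refine setIntegral_congr_fun measurableSet_Ioi fun x _ ↦ ?_
  simp only [φ, hodd, smul_neg, smul_smul, neg_add_eq_sub, ← sub_smul]
  congr 1
  push_cast
  convert Complex.exp_neg_mul_I_sub_exp_mul_I (x * (2 * π * w)) using 3 <;> ring

theorem Real.fourierInv_eq_sineTransform_of_odd {f : ℝ → E} (hf : Integrable f)
    (hodd : ∀ x, f (-x) = -f x) (w : ℝ) :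
    𝓕⁻ f w = (2 * Complex.I) • sineTransform f (2 * π * w) := by
  rw [fourierInv_eq_fourier_neg, fourier_eq_sineTransform_of_odd hf hodd, mul_neg,
    sineTransform_neg, smul_neg, ← neg_smul, neg_mul, neg_neg]

theorem Real.fourier_neg_of_odd {f : ℝ → E} (hf : Integrable f) (hodd : ∀ x, f (-x) = -f x)
    (w : ℝ) : 𝓕 f (-w) = -𝓕 f w := by
  rw [fourier_eq_sineTransform_of_odd hf hodd, fourier_eq_sineTransform_of_odd hf hodd, mul_neg,
    sineTransform_neg, smul_neg]

theorem sineTransform_sineTransform_of_odd [CompleteSpace E] {f : ℝ → E} (hc : Continuous f)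
    (hf : Integrable f) (hFf : Integrable (𝓕 f)) (hodd : ∀ x, f (-x) = -f x) (t : ℝ) :
    sineTransform (sineTransform f) t = (π / 2 : ℂ) • f t := by
  have hsine_eq_fourier (y : ℝ) : sineTransform f (2 * π * y) = (Complex.I / 2) • 𝓕 f y := by
    rw [fourier_eq_sineTransform_of_odd hf hodd, smul_smul,
      show Complex.I / 2 * (-2 * Complex.I) = 1 by ring_nf; simp, one_smul]
  have hinversion : f t = (2 * Complex.I) • sineTransform (𝓕 f) (2 * π * t) := by
    rw [← fourierInv_eq_sineTransform_of_odd hFf (fourier_neg_of_odd hf hodd),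
      hc.fourierInv_fourier_eq hf hFf]
  calc sineTransform (sineTransform f) t
      = (2 * π : ℝ) •
          ∫ y in Ioi 0, (Real.sin (2 * π * y * t) : ℂ) • sineTransform f (2 * π * y) := by
        rw [integral_comp_mul_left_Ioi' (fun x ↦ (Real.sin (x * t) : ℂ) • sineTransform f x) 0
          (by positivity), mul_zero, sineTransform]
    _ = (2 * π : ℝ) • (Complex.I / 2) • sineTransform (𝓕 f) (2 * π * t) := by
        congr 1
        rw [sineTransform, ← integral_smul]
        refine setIntegral_congr_fun measurableSet_Ioi fun y _ ↦ ?_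
        rw [hsine_eq_fourier, smul_comm, mul_right_comm, mul_comm _ y]
    _ = (π / 2 : ℂ) • f t := by
        rw [hinversion, ← Complex.coe_smul, smul_smul, smul_smul]
        congr 1
        push_cast
        ring

end SineTransform

theorem distFT_comp_inverse_eq_id_of_odd_schwartz_general
    (g : SchwartzMap ℝ ℂ) (hodd : ∀ x : ℝ, g (-x) = -g x) (lam : ℝ) :
    ((2 / Real.pi : ℝ) : ℂ) *
        (∫ s in Ioi (1 : ℝ),
          (Real.sin (lam * (s - 1)) : ℂ) *
            ∫ mu in Ioi (0 : ℝ), (Real.sin (mu * (s - 1)) : ℂ) * g mu)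
      = g lam := by
  have hshift : ∫ s in Ioi (1 : ℝ), (Real.sin (lam * (s - 1)) : ℂ) *
      ∫ mu in Ioi (0 : ℝ), (Real.sin (mu * (s - 1)) : ℂ) * g mu =
        sineTransform (sineTransform g) lam := by
    refine (integral_Ioi_comp_sub_right
      (fun t ↦ (Real.sin (lam * t) : ℂ) * sineTransform g t) 1 1).trans ?_
    simp only [sub_self, sineTransform, smul_eq_mul, mul_comm lam]
  rw [hshift, sineTransform_sineTransform_of_odd g.continuous g.integrable (𝓕 g).integrable hodd,
    smul_eq_mul, ← mul_assoc]
  push_cast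
  field_simp

/-- If `g : ℝ → ℂ` is an odd Schwartz function, then for every
`λ > 0`, `(2/π) ∫₁^∞ sin(λ(s−1)) (∫₀^∞ sin(μ(s−1)) g(μ) dμ) ds = g(λ)`;
i.e. `𝓕_D ∘ 𝓕_D⁻¹` is the identity on odd Schwartz functions restricted to `(0,∞)`. -/
theorem distFT_comp_inverse_eq_id_of_odd_schwartz
    (g : SchwartzMap ℝ ℂ) (hodd : ∀ x : ℝ, g (-x) = -g x) (lam : ℝ) (hlam : 0 < lam) :
    ((2 / Real.pi : ℝ) : ℂ) *
        (∫ s in Ioi (1 : ℝ),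
          (Real.sin (lam * (s - 1)) : ℂ) *
            ∫ mu in Ioi (0 : ℝ), (Real.sin (mu * (s - 1)) : ℂ) * g mu)
      = g lam :=
  distFT_comp_inverse_eq_id_of_odd_schwartz_general g hodd lam
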